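/- Let n ≥ 1 and let p₁ < p₂ < ⋯ < pₙ be prime numbers with 5 ≤ p₁. For each j set ξⱼ = i·√(pⱼ(pⱼ − 2)) ∈ ℂ. Then for every j with 1 ≤ j ≤ n there exists a field automorphism φⱼ of ℚ(ξ₁, …, ξₙ) over ℚ such that φⱼ(ξⱼ) = −ξⱼ and φⱼ(ξₗ) = ξₗ for all ℓ ≠ j. -/

import Mathlib

/-- The complex number ξ_p = i·√(p(p−2)). -/
noncomputable def xi (p : ℕ) : ℂ :=
  Complex.I * (Real.sqrt ((p : ℝ) * ((p : ℝ) - 2)) : ℝ)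

/-!
Each `ξ_p` is a square root of the rational number `-p(p-2)`. If `x² ∈ F` and `x` lies in
`F(y₁, …, y_k)` with all `y_i² ∈ F`, then `x · ∏_{i ∈ S} y_i ∈ F` for some `S`: writing `x = c + e y`
over `F(y)`, the cross term `2 c e y` of `x²` forces `c = 0` or `e = 0` unless `y ∈ F`. Hence if
`ξ_j ∈ ℚ(ξ_l : l ≠ j)`, then `∏_{l ∈ M} p_l(p_l - 2)` is a rational square for some nonempty `M`,
which is false because the largest prime of `M` divides it exactly once. So `ξ_j` has degree 2 over
`ℚ(ξ_l : l ≠ j)`, and the nontrivial automorphism of this quadratic extension is the required `φ_j`.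
-/

open IntermediateField Polynomial

section Quadratic

variable {F E : Type*} [Field F] [Field E] [Algebra F E] {y : E}

theorem exists_eq_add_mul_of_mem_adjoin_simple (hy : y ^ 2 ∈ Set.range (algebraMap F E))
    {x : E} (hx : x ∈ F⟮y⟯) : ∃ c e : F, x = algebraMap F E c + algebraMap F E e * y := by
  obtain ⟨r, hr⟩ := hy
  set P : F[X] := X ^ 2 - C r
  have hPm : P.Monic := monic_X_pow_sub_C r two_ne_zero
  have hPy : aeval y P = 0 := by simp [P, hr]
  have hyint : IsIntegral F y := ⟨P, hPm, by rwa [← aeval_def]⟩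
  rw [← mem_toSubalgebra, adjoin_simple_toSubalgebra_of_isAlgebraic hyint.isAlgebraic,
    Algebra.adjoin_singleton_eq_range_aeval] at hx
  obtain ⟨f, rfl⟩ := hx
  have hdeg : (f %ₘ P).natDegree ≤ 1 := by
    have := natDegree_modByMonic_lt f hPm (by rintro h; simpa [P] using congrArg natDegree h)
    rw [natDegree_X_pow_sub_C] at this
    omega
  refine ⟨(f %ₘ P).coeff 0, (f %ₘ P).coeff 1, ?_⟩
  change aeval y f = _
  rw [← aeval_modByMonic_eq_self_of_root hPy, eq_X_add_C_of_natDegree_le_one hdeg]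
  simp [add_comm]

theorem exists_algEquiv_adjoin_simple_gen_eq_neg (hy : y ^ 2 ∈ Set.range (algebraMap F E))
    (hyF : y ∉ Set.range (algebraMap F E)) :
    ∃ σ : F⟮y⟯ ≃ₐ[F] F⟮y⟯, σ (AdjoinSimple.gen F y) = -AdjoinSimple.gen F y := by
  obtain ⟨r, hr⟩ := hy
  set P : F[X] := X ^ 2 - C r
  have hPm : P.Monic := monic_X_pow_sub_C r two_ne_zero
  have hPy : aeval y P = 0 := by simp [P, hr]
  have hyint : IsIntegral F y := ⟨P, hPm, by rwa [← aeval_def]⟩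
  have hirr : Irreducible P := by
    refine X_pow_sub_C_irreducible_of_prime Nat.prime_two fun b hb => hyF ?_
    have hb' : algebraMap F E b ^ 2 = y ^ 2 := by rw [← map_pow, hb, hr]
    have : (y - algebraMap F E b) * (y + algebraMap F E b) = 0 := by linear_combination -hb'
    rcases mul_eq_zero.mp this with h | h
    · exact ⟨b, (sub_eq_zero.mp h).symm⟩
    · exact ⟨-b, by rw [map_neg]; linear_combination -h⟩
  have hmin : minpoly F y = P := (minpoly.eq_of_irreducible_of_monic hirr hPy hPm).symm
  have hroot : -AdjoinSimple.gen F y ∈ (minpoly F y).aroots F⟮y⟯ := by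
    rw [mem_aroots, hmin]
    refine ⟨hPm.ne_zero, ?_⟩
    apply (algebraMap F⟮y⟯ E).injective
    simp [P, hr]
  have : FiniteDimensional F F⟮y⟯ := adjoin.finiteDimensional hyint
  let φ := (algHomAdjoinIntegralEquiv F hyint).symm ⟨_, hroot⟩
  exact ⟨AlgEquiv.ofBijective φ φ.bijective, algHomAdjoinIntegralEquiv_symm_apply_gen F hyint _⟩

end Quadratic

namespace IntermediateField

variable {K E : Type*} [Field K] [Field E] [Algebra K E] {F : IntermediateField K E}

theorem mem_or_mul_mem_of_mem_adjoin_simple (h2 : (2 : E) ≠ 0) {x y : E} (hy : y ^ 2 ∈ F)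
    (hx2 : x ^ 2 ∈ F) (hx : x ∈ F⟮y⟯) : x ∈ F ∨ x * y ∈ F := by
  obtain ⟨⟨c, hc⟩, ⟨e, he⟩, rfl⟩ := exists_eq_add_mul_of_mem_adjoin_simple ⟨⟨y ^ 2, hy⟩, rfl⟩ hx
  simp only [algebraMap_apply] at hx2 ⊢
  by_cases hc0 : c = 0
  · right
    rw [hc0, zero_add, mul_assoc, ← sq]
    exact F.mul_mem he hy
  by_cases he0 : e = 0
  · left
    simpa [he0] using hc
  left
  have hyF : y = (2 * c * e)⁻¹ * ((c + e * y) ^ 2 - c ^ 2 - e ^ 2 * y ^ 2) := by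
    field_simp
    ring
  have h2F : (2 : E) ∈ F := by exact_mod_cast F.natCast_mem 2
  rw [hyF]
  refine F.add_mem hc (F.mul_mem he (F.mul_mem (F.inv_mem ?_) ?_))
  · exact F.mul_mem (F.mul_mem h2F hc) he
  · exact F.sub_mem (F.sub_mem hx2 (pow_mem hc 2)) (F.mul_mem (pow_mem he 2) hy)

theorem exists_mul_prod_mem_of_mem_sup_adjoin (h2 : (2 : E) ≠ 0) {ι : Type*} [DecidableEq ι]
    {y : ι → E} {x : E} (T : Finset ι) (hy : ∀ i ∈ T, y i ^ 2 ∈ F)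
    (hx2 : x ^ 2 ∈ F) (hx : x ∈ F ⊔ adjoin K (y '' T)) : ∃ S ⊆ T, x * ∏ i ∈ S, y i ∈ F := by
  induction T using Finset.induction_on generalizing F with
  | empty => exact ⟨∅, subset_rfl, by simpa using hx⟩
  | @insert a T haT ih =>
    have hF' : restrictScalars K F⟮y a⟯ = F ⊔ adjoin K {y a} := restrictScalars_adjoin_eq_sup ..
    have hFF' : F ≤ restrictScalars K F⟮y a⟯ := hF' ▸ le_sup_left
    have hx' : x ∈ restrictScalars K F⟮y a⟯ ⊔ adjoin K (y '' T) := by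
      rwa [Finset.coe_insert, Set.image_insert_eq, ← Set.singleton_union, adjoin_union,
        ← sup_assoc, ← hF'] at hx
    obtain ⟨S, hST, hS⟩ := ih (fun i hi => hFF' (hy i (by simp [hi]))) (hFF' hx2) hx'
    have hS2 : (x * ∏ i ∈ S, y i) ^ 2 ∈ F := by
      rw [mul_pow, ← Finset.prod_pow]
      exact F.mul_mem hx2 (prod_mem fun i hi => hy i (by simp [hST hi]))
    rcases mem_or_mul_mem_of_mem_adjoin_simple h2 (hy a (by simp)) hS2 hS with h | h
    · exact ⟨S, hST.trans (Finset.subset_insert a T), h⟩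
    · refine ⟨insert a S, Finset.insert_subset_insert a hST, ?_⟩
      rw [Finset.prod_insert fun haS => haT (hST haS)]
      convert h using 1
      ring

theorem exists_algEquiv_neg_of_sq_mem {x : E} (hx2 : x ^ 2 ∈ F) (hx : x ∉ F)
    {L : IntermediateField K E} (hL : F ⊔ K⟮x⟯ = L) :
    ∃ σ : L ≃ₐ[K] L, (∀ z : L, (z : E) ∈ F → (σ z : E) = z) ∧
      ∀ hxL : x ∈ L, (σ ⟨x, hxL⟩ : E) = -x := by
  rw [← restrictScalars_adjoin_eq_sup] at hL
  subst hL
  obtain ⟨σ, hσ⟩ := exists_algEquiv_adjoin_simple_gen_eq_neg (F := F) (y := x) ⟨⟨x ^ 2, hx2⟩, rfl⟩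
    (by rintro ⟨⟨z, hz⟩, h⟩; exact hx (h ▸ hz))
  refine ⟨σ.restrictScalars K, fun z hz => ?_, fun _ => congrArg Subtype.val hσ⟩
  exact congrArg Subtype.val (σ.commutes ⟨z, hz⟩)

end IntermediateField

theorem Nat.not_isSquare_prod_mul_sub_two {s : Finset ℕ} (hs : s.Nonempty)
    (hprime : ∀ q ∈ s, q.Prime) (h3 : ∀ q ∈ s, 3 ≤ q) : ¬IsSquare (∏ q ∈ s, q * (q - 2)) := by
  set P := s.max' hs
  have hPs : P ∈ s := s.max'_mem hs
  have hP : P.Prime := hprime P hPs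
  -- every factor other than the `P` of `P * (P - 2)` is positive and smaller than `P`
  have hndvd : ¬P ∣ (P - 2) * ∏ q ∈ s.erase P, q * (q - 2) := by
    have := h3 P hPs
    rw [hP.prime.dvd_mul, hP.prime.dvd_finsetProd_iff]
    rintro (h | ⟨q, hq, h⟩)
    · exact Nat.not_dvd_of_pos_of_lt (by omega) (by omega) h
    · have hqP : q < P := (s.le_max' q (Finset.mem_of_mem_erase hq)).lt_of_ne
        (Finset.ne_of_mem_erase hq)
      have := h3 q (Finset.mem_of_mem_erase hq)
      rcases hP.prime.dvd_mul.mp h with h | h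
      · exact Nat.not_dvd_of_pos_of_lt (by omega) hqP h
      · exact Nat.not_dvd_of_pos_of_lt (by omega) (by omega) h
  rintro ⟨r, hr⟩
  rw [← Finset.mul_prod_erase s _ hPs, mul_assoc] at hr
  obtain ⟨u, rfl⟩ : P ∣ r := (hP.prime.dvd_mul.mp ⟨_, hr.symm⟩).elim id id
  exact hndvd ⟨u * u, Nat.eq_of_mul_eq_mul_left hP.pos (by rw [hr]; ring)⟩

theorem xi_sq {p : ℕ} (hp : 2 ≤ p) : xi p ^ 2 = -((p * (p - 2) : ℕ) : ℂ) := by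
  have hpos : (0 : ℝ) ≤ p * (p - 2) := mul_nonneg (by positivity) (by norm_num; exact_mod_cast hp)
  rw [xi, mul_pow, Complex.I_sq, ← Complex.ofReal_pow, Real.sq_sqrt hpos]
  push_cast [hp]
  ring

theorem xi_sq_mem (F : IntermediateField ℚ ℂ) {p : ℕ} (hp : 2 ≤ p) : xi p ^ 2 ∈ F := by
  rw [xi_sq hp]
  exact neg_mem (F.natCast_mem _)

theorem xi_notMem_adjoin {ι : Type*} [DecidableEq ι] {p : ι → ℕ} (hp : ∀ i, (p i).Prime)
    (hinj : Function.Injective p) (h3 : ∀ i, 3 ≤ p i) {T : Finset ι} {j : ι} (hj : j ∉ T) :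
    xi (p j) ∉ adjoin ℚ ((fun i => xi (p i)) '' T) := by
  intro hmem
  have h2 : ∀ i, 2 ≤ p i := fun i => (h3 i).trans' (by norm_num)
  obtain ⟨S, hST, hS⟩ := exists_mul_prod_mem_of_mem_sup_adjoin two_ne_zero T (F := ⊥)
    (fun i _ => xi_sq_mem ⊥ (h2 i)) (xi_sq_mem ⊥ (h2 j)) (by rwa [bot_sup_eq])
  obtain ⟨q, hq⟩ := mem_bot.mp hS
  have hq2 : q ^ 2 = ∏ i ∈ insert j S, -((p i * (p i - 2) : ℕ) : ℚ) := by
    apply (algebraMap ℚ ℂ).injective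
    rw [map_pow, hq, Finset.prod_insert fun h => hj (hST h), mul_pow, ← Finset.prod_pow,
      map_mul, map_prod]
    simp only [xi_sq (h2 _), map_neg, map_natCast]
  have hsq : IsSquare (∏ r ∈ (insert j S).image p, r * (r - 2)) := by
    rw [Finset.prod_image hinj.injOn, ← Rat.isSquare_natCast_iff]
    refine ⟨|q|, ?_⟩
    rw [← abs_mul, ← sq, hq2, Finset.abs_prod]
    push_cast
    simp
  exact Nat.not_isSquare_prod_mul_sub_two (by simp) (by simp [hp]) (by simp [h3]) hsq

theorem exists_automorphism_neg_xi_general (n : ℕ) (p : Fin n → ℕ)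
    (hp : ∀ j, (p j).Prime) (hmono : StrictMono p) (h5 : ∀ j, 5 ≤ p j) :
    ∀ j : Fin n, ∃ φ :
      ↥(IntermediateField.adjoin ℚ (Set.range fun j : Fin n => xi (p j))) ≃ₐ[ℚ]
      ↥(IntermediateField.adjoin ℚ (Set.range fun j : Fin n => xi (p j))),
      (φ ⟨xi (p j), IntermediateField.subset_adjoin ℚ _ ⟨j, rfl⟩⟩ : ℂ) = -(xi (p j)) ∧
      ∀ l : Fin n, l ≠ j →
        (φ ⟨xi (p l), IntermediateField.subset_adjoin ℚ _ ⟨l, rfl⟩⟩ : ℂ) = xi (p l) := by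
  intro j
  have hL : adjoin ℚ ((fun l => xi (p l)) '' ↑(Finset.univ.erase j)) ⊔ ℚ⟮xi (p j)⟯ =
      adjoin ℚ (Set.range fun l => xi (p l)) := by
    rw [← adjoin_union, ← Set.image_singleton (f := fun l => xi (p l)), ← Set.image_union,
      Finset.coe_erase, Finset.coe_univ, Set.sdiff_union_self, Set.univ_union, Set.image_univ]
  obtain ⟨σ, hfix, hneg⟩ := exists_algEquiv_neg_of_sq_mem (xi_sq_mem _ (by linarith [h5 j]))
    (xi_notMem_adjoin hp hmono.injective (fun i => by linarith [h5 i])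
      (Finset.notMem_erase j _)) hL
  exact ⟨σ, hneg _, fun l hl =>
    hfix _ (subset_adjoin ℚ _ ⟨l, Finset.mem_erase.mpr ⟨hl, Finset.mem_univ l⟩, rfl⟩)⟩

/-- For primes 5 ≤ p₁ < ⋯ < pₙ and each j, there is an automorphism of
ℚ(ξ₁,…,ξₙ) over ℚ sending ξⱼ to −ξⱼ and fixing ξₗ for ℓ ≠ j. -/
theorem exists_automorphism_neg_xi (n : ℕ) (hn : 1 ≤ n) (p : Fin n → ℕ)
    (hp : ∀ j, (p j).Prime) (hmono : StrictMono p) (h5 : ∀ j, 5 ≤ p j) :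
    ∀ j : Fin n, ∃ φ :
      ↥(IntermediateField.adjoin ℚ (Set.range fun j : Fin n => xi (p j))) ≃ₐ[ℚ]
      ↥(IntermediateField.adjoin ℚ (Set.range fun j : Fin n => xi (p j))),
      (φ ⟨xi (p j), IntermediateField.subset_adjoin ℚ _ ⟨j, rfl⟩⟩ : ℂ) = -(xi (p j)) ∧
      ∀ l : Fin n, l ≠ j →
        (φ ⟨xi (p l), IntermediateField.subset_adjoin ℚ _ ⟨l, rfl⟩⟩ : ℂ) = xi (p l) :=
  exists_automorphism_neg_xi_general n p hp hmono h5
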